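/- For every state-action pair (s,a), the state-action occupation measure is Lipschitz in the policy with constant |A| / (1-γ)²: for all policies π and π', |d^{π'}(s,a) - d^π(s,a)| ≤ (|A| / (1-γ)²) * (∑_{s',a'} (π'(s',a') - π(s',a'))²)^{1/2}. -/

import Mathlib

/-!
Write `B_π = (1 - γ P^π)⁻¹`, so that `d^π = μᵀ B_π`. For a row-stochastic `K` the resolvent
`(1 - γ K)⁻¹` is entrywise nonnegative, by a discrete minimum principle, and has row sums
`(1 - γ)⁻¹`. The resolvent identity `B_π' - B_π = γ B_π' (P^π' - P^π) B_π` then bounds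
`|d^π'(t) - d^π(t)|` by `γ/(1-γ)²` times the largest ℓ¹-distance between corresponding rows of
`P^π'` and `P^π`, which is at most `|A| ‖π' - π‖₂`. Finally
`d^π'(s) π'(s,a) - d^π(s) π(s,a) = (d^π' - d^π)(s) π'(s,a) + d^π(s) (π' - π)(s,a)` with
`d^π(s) ≤ (1-γ)⁻¹`, and `γ |A| / (1-γ)² + 1 / (1-γ) ≤ |A| / (1-γ)²`.
-/

open Finset

noncomputable section

/-- `P^π(s,s') = ∑ a, π s a * P s a s'`. -/
def Pmat {S A : Type*} [Fintype A] (P : S → A → S → ℝ) (π : S → A → ℝ) :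
    Matrix S S ℝ := fun s s' => ∑ a, π s a * P s a s'

/-- state occupation measure `d^π = μᵀ (I - γ P^π)⁻¹`. -/
def dPi {S A : Type*} [Fintype S] [Fintype A] [DecidableEq S]
    (γ : ℝ) (P : S → A → S → ℝ) (μ : S → ℝ) (π : S → A → ℝ) : S → ℝ :=
  fun s' => ∑ s, μ s * (1 - γ • Pmat P π)⁻¹ s s'

/-- state-action occupation measure `d^π(s,a) = d^π(s) * π s a`. -/
def dSA {S A : Type*} [Fintype S] [Fintype A] [DecidableEq S]
    (γ : ℝ) (P : S → A → S → ℝ) (μ : S → ℝ) (π : S → A → ℝ) : S → A → ℝ :=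
  fun s a => dPi γ P μ π s * π s a

/-- return `ρ^π_R = ∑_{s,a} d^π(s,a) * R(s,a)`. -/
def mdpReturn {S A : Type*} [Fintype S] [Fintype A] [DecidableEq S]
    (γ : ℝ) (P : S → A → S → ℝ) (μ : S → ℝ) (π : S → A → ℝ) (R : S → A → ℝ) : ℝ :=
  ∑ s, ∑ a, dSA γ P μ π s a * R s a

/-- `‖x‖_r = (∑_{s,a} |x(s,a)|^r)^{1/r}` with real exponents via `Real.rpow`. -/
def LpNorm {S A : Type*} [Fintype S] [Fintype A] (r : ℝ) (x : S → A → ℝ) : ℝ :=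
  (∑ s, ∑ a, |x s a| ^ r) ^ (1 / r)

end

open Finset Matrix

theorem abs_sum_mul_le {ι : Type*} (s : Finset ι) (x y : ι → ℝ) {c : ℝ}
    (hy : ∀ i ∈ s, |y i| ≤ c) : |∑ i ∈ s, x i * y i| ≤ (∑ i ∈ s, |x i|) * c :=
  calc |∑ i ∈ s, x i * y i| ≤ ∑ i ∈ s, |x i| * |y i| := by
        simpa only [abs_mul] using abs_sum_le_sum_abs (fun i => x i * y i) s
    _ ≤ ∑ i ∈ s, |x i| * c :=
        sum_le_sum fun i hi => mul_le_mul_of_nonneg_left (hy i hi) (abs_nonneg _)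
    _ = (∑ i ∈ s, |x i|) * c := (sum_mul ..).symm

theorem abs_mul_sub_mul_le {x x' y y' : ℝ} (hx : 0 ≤ x) (hy' : 0 ≤ y') :
    |x' * y' - x * y| ≤ |x' - x| * y' + x * |y' - y| :=
  calc |x' * y' - x * y| = |(x' - x) * y' + x * (y' - y)| := by ring_nf
    _ ≤ |x' - x| * y' + x * |y' - y| := by
        simpa only [abs_mul, abs_of_nonneg hx, abs_of_nonneg hy'] using abs_add_le ((x' - x) * y') (x * (y' - y))

namespace Matrix

variable {n : Type*} [Fintype n] [DecidableEq n] {K K' : Matrix n n ℝ} {γ : ℝ}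

/- Discrete minimum principle: at a minimiser `j` of `x` the average `(K *ᵥ x) j` is at least
`x j`, so `0 ≤ x j - γ (K *ᵥ x) j ≤ (1 - γ) x j`. -/
theorem nonneg_of_one_sub_smul_mulVec_nonneg (hK : K ∈ rowStochastic ℝ n) (hγ0 : 0 ≤ γ)
    (hγ1 : γ < 1) {x : n → ℝ} (hx : 0 ≤ (1 - γ • K) *ᵥ x) : 0 ≤ x := by
  intro i
  obtain ⟨j, -, hj⟩ := exists_min_image univ x ⟨i, mem_univ i⟩
  have hKx : x j ≤ (K *ᵥ x) j :=
    calc x j = ∑ k, K j k * x j := by rw [← sum_mul, sum_row_of_mem_rowStochastic hK, one_mul]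
      _ ≤ ∑ k, K j k * x k := sum_le_sum fun k _ =>
          mul_le_mul_of_nonneg_left (hj k (mem_univ k)) (nonneg_of_mem_rowStochastic hK)
  have hxj : 0 ≤ x j - γ * (K *ᵥ x) j := by
    simpa [sub_mulVec, smul_mulVec] using hx j
  have : 0 ≤ x j := by nlinarith
  exact this.trans (hj i (mem_univ i))

theorem isUnit_det_one_sub_smul (hK : K ∈ rowStochastic ℝ n) (hγ0 : 0 ≤ γ) (hγ1 : γ < 1) :
    IsUnit (1 - γ • K).det := by
  rw [isUnit_iff_ne_zero, ne_eq, ← exists_mulVec_eq_zero_iff]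
  rintro ⟨v, hv0, hv⟩
  have hv_nonneg := nonneg_of_one_sub_smul_mulVec_nonneg hK hγ0 hγ1 hv.ge
  have hv_nonpos := nonneg_of_one_sub_smul_mulVec_nonneg hK hγ0 hγ1 (x := -v)
    (by rw [mulVec_neg, hv, neg_zero])
  exact hv0 (le_antisymm (neg_nonneg.mp hv_nonpos) hv_nonneg)

theorem inv_one_sub_smul_nonneg (hK : K ∈ rowStochastic ℝ n) (hγ0 : 0 ≤ γ) (hγ1 : γ < 1)
    (i j : n) : 0 ≤ (1 - γ • K)⁻¹ i j := by
  have hcol : 0 ≤ (1 - γ • K)⁻¹ *ᵥ Pi.single j 1 := by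
    apply nonneg_of_one_sub_smul_mulVec_nonneg hK hγ0 hγ1
    rw [mulVec_mulVec, mul_nonsing_inv _ (isUnit_det_one_sub_smul hK hγ0 hγ1), one_mulVec]
    exact Pi.single_nonneg.mpr zero_le_one
  simpa [mulVec_single_one] using hcol i

theorem inv_one_sub_smul_mulVec_one (hK : K ∈ rowStochastic ℝ n) (hγ0 : 0 ≤ γ) (hγ1 : γ < 1) :
    (1 - γ • K)⁻¹ *ᵥ 1 = (1 - γ)⁻¹ • 1 := by
  have h : (1 - γ • K) *ᵥ 1 = (1 - γ) • (1 : n → ℝ) := by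
    rw [sub_mulVec, one_mulVec, smul_mulVec, one_vecMul_of_mem_rowStochastic hK, sub_smul,
      one_smul]
  calc (1 - γ • K)⁻¹ *ᵥ 1 = (1 - γ)⁻¹ • ((1 - γ • K)⁻¹ *ᵥ ((1 - γ) • 1)) := by
        rw [mulVec_smul, inv_smul_smul₀ (sub_ne_zero.mpr hγ1.ne')]
    _ = (1 - γ)⁻¹ • 1 := by
        rw [← h, mulVec_mulVec, nonsing_inv_mul _ (isUnit_det_one_sub_smul hK hγ0 hγ1),
          one_mulVec]

theorem inv_one_sub_smul_le (hK : K ∈ rowStochastic ℝ n) (hγ0 : 0 ≤ γ) (hγ1 : γ < 1)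
    (i j : n) : (1 - γ • K)⁻¹ i j ≤ (1 - γ)⁻¹ := by
  have hrow := congrFun (inv_one_sub_smul_mulVec_one hK hγ0 hγ1) i
  simp only [mulVec, dotProduct, Pi.one_apply, mul_one, Pi.smul_apply, smul_eq_mul] at hrow
  exact hrow ▸ single_le_sum (fun k _ => inv_one_sub_smul_nonneg hK hγ0 hγ1 i k) (mem_univ j)

theorem inv_one_sub_smul_sub_inv_one_sub_smul (hK : K ∈ rowStochastic ℝ n)
    (hK' : K' ∈ rowStochastic ℝ n) (hγ0 : 0 ≤ γ) (hγ1 : γ < 1) :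
    (1 - γ • K')⁻¹ - (1 - γ • K)⁻¹ = γ • ((1 - γ • K')⁻¹ * (K' - K) * (1 - γ • K)⁻¹) := by
  rw [inv_sub_inv (by simp only [isUnit_iff_isUnit_det, isUnit_det_one_sub_smul hK' hγ0 hγ1,
    isUnit_det_one_sub_smul hK hγ0 hγ1]), sub_sub_sub_cancel_left, ← smul_sub,
    Matrix.mul_smul, Matrix.smul_mul]

variable {μ : n → ℝ}

theorem vecMul_inv_one_sub_smul_nonneg (hK : K ∈ rowStochastic ℝ n) (hγ0 : 0 ≤ γ)
    (hγ1 : γ < 1) (hμ : 0 ≤ μ) : 0 ≤ μ ᵥ* (1 - γ • K)⁻¹ := fun t =>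
  sum_nonneg fun u _ => mul_nonneg (hμ u) (inv_one_sub_smul_nonneg hK hγ0 hγ1 u t)

theorem sum_vecMul_inv_one_sub_smul (hK : K ∈ rowStochastic ℝ n) (hγ0 : 0 ≤ γ) (hγ1 : γ < 1)
    (μ : n → ℝ) : ∑ t, (μ ᵥ* (1 - γ • K)⁻¹) t = (1 - γ)⁻¹ * ∑ u, μ u := by
  have h := dotProduct_mulVec μ (1 - γ • K)⁻¹ 1
  rw [inv_one_sub_smul_mulVec_one hK hγ0 hγ1, dotProduct_smul, dotProduct_one,
    dotProduct_one, smul_eq_mul] at h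
  exact h.symm

theorem vecMul_inv_one_sub_smul_le (hK : K ∈ rowStochastic ℝ n) (hγ0 : 0 ≤ γ) (hγ1 : γ < 1)
    (hμ : 0 ≤ μ) (hμsum : ∑ u, μ u = 1) (t : n) : (μ ᵥ* (1 - γ • K)⁻¹) t ≤ (1 - γ)⁻¹ := by
  have hsum := sum_vecMul_inv_one_sub_smul hK hγ0 hγ1 μ
  rw [hμsum, mul_one] at hsum
  exact hsum ▸ single_le_sum (fun u _ => vecMul_inv_one_sub_smul_nonneg hK hγ0 hγ1 hμ u)
    (mem_univ t)

theorem abs_vecMul_inv_one_sub_smul_sub_le (hK : K ∈ rowStochastic ℝ n)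
    (hK' : K' ∈ rowStochastic ℝ n) (hγ0 : 0 ≤ γ) (hγ1 : γ < 1) (hμ : 0 ≤ μ)
    (hμsum : ∑ u, μ u = 1) {ε : ℝ} (hε : ∀ u, ∑ v, |K' u v - K u v| ≤ ε) (t : n) :
    |(μ ᵥ* (1 - γ • K')⁻¹) t - (μ ᵥ* (1 - γ • K)⁻¹) t| ≤ γ * ((1 - γ)⁻¹ ^ 2 * ε) := by
  set B := (1 - γ • K)⁻¹
  set d' := μ ᵥ* (1 - γ • K')⁻¹
  have hκ : 0 ≤ (1 - γ)⁻¹ := inv_nonneg.mpr (sub_nonneg.mpr hγ1.le)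
  have hdiff : d' t - (μ ᵥ* B) t = γ * ∑ w, d' w * ((K' - K) * B) w t := by
    rw [← Pi.sub_apply, ← vecMul_sub, inv_one_sub_smul_sub_inv_one_sub_smul hK hK' hγ0 hγ1,
      vecMul_smul, Matrix.mul_assoc, ← vecMul_vecMul]
    rfl
  have hinner : ∀ w, |((K' - K) * B) w t| ≤ ε * (1 - γ)⁻¹ := fun w =>
    calc |((K' - K) * B) w t| ≤ (∑ v, |K' w v - K w v|) * (1 - γ)⁻¹ :=
          abs_sum_mul_le _ _ _ fun v _ => by
            rw [abs_of_nonneg (inv_one_sub_smul_nonneg hK hγ0 hγ1 v t)]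
            exact inv_one_sub_smul_le hK hγ0 hγ1 v t
      _ ≤ ε * (1 - γ)⁻¹ := mul_le_mul_of_nonneg_right (hε w) hκ
  have hd'mass : ∑ w, |d' w| = (1 - γ)⁻¹ := by
    rw [sum_congr rfl fun w _ => abs_of_nonneg (vecMul_inv_one_sub_smul_nonneg hK' hγ0 hγ1 hμ w),
      sum_vecMul_inv_one_sub_smul hK' hγ0 hγ1, hμsum, mul_one]
  rw [hdiff, abs_mul, abs_of_nonneg hγ0]
  gcongr
  calc |∑ w, d' w * ((K' - K) * B) w t| ≤ (∑ w, |d' w|) * (ε * (1 - γ)⁻¹) :=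
        abs_sum_mul_le _ _ _ fun w _ => hinner w
    _ = (1 - γ)⁻¹ ^ 2 * ε := by rw [hd'mass]; ring

end Matrix

section Policy

variable {S A : Type*} [Fintype S] [Fintype A] {P : S → A → S → ℝ}

theorem dPi_eq_vecMul [DecidableEq S] (γ : ℝ) (μ : S → ℝ) (π : S → A → ℝ) :
    dPi γ P μ π = μ ᵥ* (1 - γ • Pmat P π)⁻¹ :=
  rfl

theorem Pmat_mem_rowStochastic [DecidableEq S] (hP : ∀ s a s', 0 ≤ P s a s')
    (hPsum : ∀ s a, ∑ s', P s a s' = 1) {π : S → A → ℝ} (hπ : ∀ s a, 0 ≤ π s a)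
    (hπsum : ∀ s, ∑ a, π s a = 1) : Pmat P π ∈ rowStochastic ℝ S := by
  refine mem_rowStochastic_iff_sum.mpr ⟨fun s s' => sum_nonneg fun a _ =>
    mul_nonneg (hπ s a) (hP s a s'), fun s => ?_⟩
  simp only [Pmat]
  rw [sum_comm]
  simp only [← mul_sum, hPsum, mul_one, hπsum]

theorem sum_abs_Pmat_sub_le (hP : ∀ s a s', 0 ≤ P s a s') (hPsum : ∀ s a, ∑ s', P s a s' = 1)
    (π π' : S → A → ℝ) (s : S) :
    ∑ s', |Pmat P π' s s' - Pmat P π s s'| ≤ ∑ a, |π' s a - π s a| :=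
  calc ∑ s', |Pmat P π' s s' - Pmat P π s s'| = ∑ s', |∑ a, (π' s a - π s a) * P s a s'| := by
        simp only [Pmat, sub_mul, sum_sub_distrib]
    _ ≤ ∑ s', ∑ a, |π' s a - π s a| * P s a s' :=
        sum_le_sum fun s' _ => (abs_sum_le_sum_abs _ _).trans_eq
          (sum_congr rfl fun a _ => by rw [abs_mul, abs_of_nonneg (hP s a s')])
    _ = ∑ a, |π' s a - π s a| := by
        rw [sum_comm]
        simp only [← mul_sum, hPsum, mul_one]

theorem abs_le_rpow_sum_sum_sq (x : S → A → ℝ) (s : S) (a : A) :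
    |x s a| ≤ (∑ s', ∑ a', x s' a' ^ 2) ^ ((1 : ℝ) / 2) := by
  rw [← Real.sqrt_eq_rpow]
  apply Real.abs_le_sqrt
  calc x s a ^ 2 ≤ ∑ a', x s a' ^ 2 :=
        single_le_sum (f := fun a' => x s a' ^ 2) (fun _ _ => sq_nonneg _) (mem_univ a)
    _ ≤ ∑ s', ∑ a', x s' a' ^ 2 :=
        single_le_sum (f := fun s' => ∑ a', x s' a' ^ 2)
          (fun _ _ => sum_nonneg fun _ _ => sq_nonneg _) (mem_univ s)

end Policy

theorem stmt_15_general {S A : Type*} [Fintype S] [Fintype A] [DecidableEq S]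
    (γ : ℝ) (hγ0 : 0 ≤ γ) (hγ1 : γ < 1)
    (P : S → A → S → ℝ) (hP : ∀ s a s', 0 ≤ P s a s')
    (hPsum : ∀ s a, ∑ s', P s a s' = 1)
    (μ : S → ℝ) (hμ : ∀ s, 0 < μ s) (hμsum : ∑ s, μ s = 1)
    (π : S → A → ℝ) (hπ : ∀ s a, 0 ≤ π s a) (hπsum : ∀ s, ∑ a, π s a = 1)
    (π' : S → A → ℝ) (hπ' : ∀ s a, 0 ≤ π' s a) (hπ'sum : ∀ s, ∑ a, π' s a = 1) :
    ∀ (s : S) (a : A),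
      |dSA γ P μ π' s a - dSA γ P μ π s a| ≤
        ((Fintype.card A : ℝ) / (1 - γ) ^ 2) *
          (∑ s', ∑ a', (π' s' a' - π s' a') ^ 2) ^ ((1 : ℝ) / 2) := by
  intro s a
  simp only [dSA, dPi_eq_vecMul]
  set d := μ ᵥ* (1 - γ • Pmat P π)⁻¹
  set d' := μ ᵥ* (1 - γ • Pmat P π')⁻¹
  set δ := (∑ s', ∑ a', (π' s' a' - π s' a') ^ 2) ^ ((1 : ℝ) / 2)
  set κ := (1 - γ)⁻¹
  set c := (Fintype.card A : ℝ)
  have hK := Pmat_mem_rowStochastic hP hPsum hπ hπsum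
  have hK' := Pmat_mem_rowStochastic hP hPsum hπ' hπ'sum
  have hμ0 : 0 ≤ μ := fun u => (hμ u).le
  have hε : ∀ u, ∑ v, |Pmat P π' u v - Pmat P π u v| ≤ c * δ := fun u =>
    (sum_abs_Pmat_sub_le hP hPsum π π' u).trans <| by
      simpa using sum_le_card_nsmul univ _ δ fun b _ =>
        abs_le_rpow_sum_sum_sq (fun s a => π' s a - π s a) u b
  have hdiff : |d' s - d s| ≤ γ * (κ ^ 2 * (c * δ)) :=
    abs_vecMul_inv_one_sub_smul_sub_le hK hK' hγ0 hγ1 hμ0 hμsum hε s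
  have hd0 : 0 ≤ d s := vecMul_inv_one_sub_smul_nonneg hK hγ0 hγ1 hμ0 s
  have hdκ : d s ≤ κ := vecMul_inv_one_sub_smul_le hK hγ0 hγ1 hμ0 hμsum s
  have hπ'1 : π' s a ≤ 1 := hπ'sum s ▸ single_le_sum (fun b _ => hπ' s b) (mem_univ a)
  have hδ : |π' s a - π s a| ≤ δ := abs_le_rpow_sum_sum_sq (fun s a => π' s a - π s a) s a
  have hc : 1 ≤ c := Nat.one_le_cast.mpr (Fintype.card_pos_iff.mpr ⟨a⟩)
  have hκ : κ * (1 - γ) = 1 := inv_mul_cancel₀ (sub_ne_zero.mpr hγ1.ne')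
  calc |d' s * π' s a - d s * π s a| ≤ |d' s - d s| * π' s a + d s * |π' s a - π s a| :=
        abs_mul_sub_mul_le hd0 (hπ' s a)
    _ ≤ γ * (κ ^ 2 * (c * δ)) * 1 + κ * δ := by
        gcongr
        exact hπ' s a
    _ ≤ c / (1 - γ) ^ 2 * δ := by
        have hκδ : 0 ≤ κ * δ := mul_nonneg (inv_nonneg.mpr (sub_nonneg.mpr hγ1.le))
          ((abs_nonneg _).trans hδ)
        rw [div_eq_mul_inv, ← inv_pow]
        linear_combination -(c * κ * δ) * hκ + mul_nonneg hκδ (sub_nonneg.mpr hc)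

theorem stmt_15 {S A : Type*} [Fintype S] [Fintype A] [Nonempty S] [Nonempty A] [DecidableEq S]
    (γ : ℝ) (hγ0 : 0 ≤ γ) (hγ1 : γ < 1)
    (P : S → A → S → ℝ) (hP : ∀ s a s', 0 ≤ P s a s')
    (hPsum : ∀ s a, ∑ s', P s a s' = 1)
    (μ : S → ℝ) (hμ : ∀ s, 0 < μ s) (hμsum : ∑ s, μ s = 1)
    (π : S → A → ℝ) (hπ : ∀ s a, 0 ≤ π s a) (hπsum : ∀ s, ∑ a, π s a = 1)
    (π' : S → A → ℝ) (hπ' : ∀ s a, 0 ≤ π' s a) (hπ'sum : ∀ s, ∑ a, π' s a = 1) :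
    ∀ (s : S) (a : A),
      |dSA γ P μ π' s a - dSA γ P μ π s a| ≤
        ((Fintype.card A : ℝ) / (1 - γ) ^ 2) *
          (∑ s', ∑ a', (π' s' a' - π s' a') ^ 2) ^ ((1 : ℝ) / 2) :=
  stmt_15_general γ hγ0 hγ1 P hP hPsum μ hμ hμsum π hπ hπsum π' hπ' hπ'sum
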